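/- arXiv:0806.3609 — 4 statements merged into one kernel-verified Lean document; each statement's English description precedes it below -/
import Mathlib

section
/- Let A ∈ ℝ^{n×n}, B ∈ ℝ^{n×1}, α ∈ (0,1). There exist P ≻ 0 and F ∈ ℝ^{1×n} such that α AᵀPA + (1-α)(A+BF)ᵀP(A+BF) - P ≺ 0 if and only if there exists P ≻ 0 such that AᵀPA - P - (1-α) AᵀPB (BᵀPB)⁻¹ BᵀPA ≺ 0 (interpreting the term as 0 when BᵀPB = 0). Moreover, when such P exists with BᵀPB > 0, the choice F = -(BᵀPB)⁻¹BᵀPA satisfies the first inequality with the same P. -/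
open Matrix

/-- Negative definiteness of a real symmetric matrix. -/
def NegDef {n : ℕ} (M : Matrix (Fin n) (Fin n) ℝ) : Prop := (-M).PosDef

/-!
Completing the square in the gain: with `σ = BᵀPB` and `K = σ⁻¹ BᵀPA`,
`(A + BF)ᵀP(A + BF) = AᵀPA - σ⁻¹ AᵀPB BᵀPA + σ (F + K)ᵀ(F + K)`, so the mixed Lyapunov
matrix `α AᵀPA + (1 - α)(A + BF)ᵀP(A + BF) - P` is the Riccati matrix plus the positive
semidefinite term `(1 - α) σ (F + K)ᵀ(F + K)`, which vanishes at `F = -K`. When `σ = 0`,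
positivity of `P` forces `B = 0` and both matrices reduce to `AᵀPA - P`.
-/

namespace Matrix

theorem transpose_mul_mul_apply {R : Type*} [NonUnitalSemiring R] {m n : Type*} [Fintype m]
    (P : Matrix m m R) (B : Matrix m n R) (i j : n) :
    (Bᵀ * P * B) i j = Bᵀ i ⬝ᵥ P *ᵥ Bᵀ j := by
  rw [Matrix.mul_assoc, mul_apply]
  simp [dotProduct, mulVec, mul_apply]

variable {𝕜 : Type*} [Field 𝕜] {m k : Type*} [Fintype m]

-- Also when `M 0 0 = 0`: then both sides are `0`.
theorem inv_fin_one_eq_smul (M : Matrix (Fin 1) (Fin 1) 𝕜) : M⁻¹ = (M 0 0)⁻¹ • 1 := by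
  rw [inv_def, adjugate_fin_one, det_fin_one, Ring.inverse_eq_inv']

theorem fin_one_mul_eq_smul (M : Matrix (Fin 1) (Fin 1) 𝕜) (X : Matrix (Fin 1) k 𝕜) :
    M * X = M 0 0 • X := by
  ext i j
  fin_cases i
  simp [mul_apply]

theorem transpose_mul_mul_complete_square {P : Matrix m m 𝕜} (hP : Pᵀ = P)
    (A : Matrix m k 𝕜) (B : Matrix m (Fin 1) 𝕜) (F : Matrix (Fin 1) k 𝕜)
    (hσ : (Bᵀ * P * B) 0 0 ≠ 0) :
    (A + B * F)ᵀ * P * (A + B * F)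
      = Aᵀ * P * A - ((Bᵀ * P * B) 0 0)⁻¹ • (Aᵀ * P * B * (Bᵀ * P * A))
        + (Bᵀ * P * B) 0 0 • ((F + ((Bᵀ * P * B) 0 0)⁻¹ • (Bᵀ * P * A))ᵀ
          * (F + ((Bᵀ * P * B) 0 0)⁻¹ • (Bᵀ * P * A))) := by
  set σ := (Bᵀ * P * B) 0 0
  have hBPB : ∀ X : Matrix (Fin 1) k 𝕜, Bᵀ * (P * (B * X)) = σ • X := fun X => by
    rw [← Matrix.mul_assoc, ← Matrix.mul_assoc, fin_one_mul_eq_smul]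
  simp only [transpose_add, transpose_mul, transpose_smul, transpose_transpose, hP,
    Matrix.add_mul, Matrix.mul_add, Matrix.smul_mul, Matrix.mul_smul, Matrix.mul_assoc, hBPB,
    smul_smul, smul_add]
  match_scalars <;> field_simp
  ring

namespace PosDef

variable {m : Type*} [Fintype m] {P : Matrix m m ℝ}

omit [Fintype m] in
theorem transpose_eq (hP : P.PosDef) : Pᵀ = P := by
  rw [← conjTranspose_eq_transpose_of_trivial]
  exact hP.isHermitian

theorem transpose_mul_mul_apply_nonneg (hP : P.PosDef) (B : Matrix m (Fin 1) ℝ) :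
    0 ≤ (Bᵀ * P * B) 0 0 := by
  rw [← conjTranspose_eq_transpose_of_trivial]
  exact (hP.posSemidef.conjTranspose_mul_mul_same B).diag_nonneg

theorem eq_zero_of_transpose_mul_mul_apply_eq_zero (hP : P.PosDef) {B : Matrix m (Fin 1) ℝ}
    (hσ : (Bᵀ * P * B) 0 0 = 0) : B = 0 := by
  by_contra hB
  have hcol : Bᵀ 0 ≠ 0 := fun h => hB <| by
    ext i j
    fin_cases j
    exact congrFun h i
  have hpos := hP.dotProduct_mulVec_pos hcol
  rw [star_trivial, ← transpose_mul_mul_apply, hσ] at hpos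
  exact hpos.false

theorem mixedLyapunov_eq_riccati_add (hP : P.PosDef) (A : Matrix m m ℝ)
    (B : Matrix m (Fin 1) ℝ) (F : Matrix (Fin 1) m ℝ) (α : ℝ) :
    α • (Aᵀ * P * A) + (1 - α) • ((A + B * F)ᵀ * P * (A + B * F)) - P
      = (Aᵀ * P * A - P - ((1 - α) / (Bᵀ * P * B) 0 0) • (Aᵀ * P * B * (Bᵀ * P * A)))
        + ((1 - α) * (Bᵀ * P * B) 0 0) • ((F + ((Bᵀ * P * B) 0 0)⁻¹ • (Bᵀ * P * A))ᵀ
          * (F + ((Bᵀ * P * B) 0 0)⁻¹ • (Bᵀ * P * A))) := by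
  by_cases hσ : (Bᵀ * P * B) 0 0 = 0
  · obtain rfl := hP.eq_zero_of_transpose_mul_mul_apply_eq_zero hσ
    simp only [transpose_zero, Matrix.zero_mul, Matrix.mul_zero, add_zero, smul_zero, sub_zero,
      zero_apply, mul_zero, zero_smul]
    module
  · rw [transpose_mul_mul_complete_square hP.transpose_eq A B F hσ]
    module

theorem mixedLyapunov_optimalGain_eq_riccati (hP : P.PosDef) (A : Matrix m m ℝ)
    (B : Matrix m (Fin 1) ℝ) (α : ℝ) :
    α • (Aᵀ * P * A)
      + (1 - α) • ((A + B * (-((Bᵀ * P * B)⁻¹ * (Bᵀ * P * A))))ᵀ * P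
          * (A + B * (-((Bᵀ * P * B)⁻¹ * (Bᵀ * P * A)))))
      - P
      = Aᵀ * P * A - P - ((1 - α) / (Bᵀ * P * B) 0 0) • (Aᵀ * P * B * (Bᵀ * P * A)) := by
  rw [mixedLyapunov_eq_riccati_add hP, inv_fin_one_eq_smul, Matrix.smul_mul, Matrix.one_mul,
    neg_add_cancel, Matrix.mul_zero, smul_zero, add_zero]

end PosDef

end Matrix

theorem NegDef.of_add_posSemidef {n : ℕ} {M Q : Matrix (Fin n) (Fin n) ℝ} (h : NegDef (M + Q))
    (hQ : Q.PosSemidef) : NegDef M := by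
  unfold NegDef at *
  rw [show -M = -(M + Q) + Q by abel]
  exact h.add_posSemidef hQ

/-- Equivalence between existence of a stabilizing gain and the Riccati-type inequality,
with the explicit gain `F = -(BᵀPB)⁻¹BᵀPA`.  (The coefficient `(1-α)/(BᵀPB)` is read as `0`
when `BᵀPB = 0`, as is automatic for real division.) -/
theorem gain_exists_iff_riccati
    {n : ℕ} (A : Matrix (Fin n) (Fin n) ℝ) (B : Matrix (Fin n) (Fin 1) ℝ)
    (α : ℝ) (hα : α ∈ Set.Ioo (0:ℝ) 1) :
    ((∃ P : Matrix (Fin n) (Fin n) ℝ, ∃ F : Matrix (Fin 1) (Fin n) ℝ, P.PosDef ∧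
        NegDef (α • (Aᵀ * P * A) + (1 - α) • ((A + B * F)ᵀ * P * (A + B * F)) - P))
      ↔ (∃ P : Matrix (Fin n) (Fin n) ℝ, P.PosDef ∧
        NegDef (Aᵀ * P * A - P
          - ((1 - α) / ((Bᵀ * P * B) 0 0)) • (Aᵀ * P * B * (Bᵀ * P * A)))))
    ∧ (∀ P : Matrix (Fin n) (Fin n) ℝ, P.PosDef →
        0 < (Bᵀ * P * B) 0 0 →
        NegDef (Aᵀ * P * A - P
          - ((1 - α) / ((Bᵀ * P * B) 0 0)) • (Aᵀ * P * B * (Bᵀ * P * A))) →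
        NegDef (α • (Aᵀ * P * A)
          + (1 - α) • ((A + B * (-((Bᵀ * P * B)⁻¹ * (Bᵀ * P * A))))ᵀ * P
              * (A + B * (-((Bᵀ * P * B)⁻¹ * (Bᵀ * P * A)))))
          - P)) := by
  refine ⟨⟨?_, ?_⟩, ?_⟩
  · rintro ⟨P, F, hP, hF⟩
    rw [hP.mixedLyapunov_eq_riccati_add] at hF
    refine ⟨P, hP, hF.of_add_posSemidef (PosSemidef.smul ?_ ?_)⟩
    · rw [← conjTranspose_eq_transpose_of_trivial]
      exact posSemidef_conjTranspose_mul_self _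
    · exact mul_nonneg (sub_nonneg.2 hα.2.le) (hP.transpose_mul_mul_apply_nonneg B)
  · rintro ⟨P, hP, hR⟩
    exact ⟨P, _, hP, by rwa [hP.mixedLyapunov_optimalGain_eq_riccati]⟩
  · intro P hP _ hR
    rwa [hP.mixedLyapunov_optimalGain_eq_riccati]
end

section
/- Let A ∈ ℝ^{n×n}, B ∈ ℝ^{n×1}, α ∈ (0,1). Suppose P ≻ 0 satisfies AᵀPA - P - (1-α) AᵀPB (BᵀPB)⁻¹ BᵀPA ≺ 0 with BᵀPB > 0. Then there exists μ > 0 with μ < 1/(α BᵀPB) such that Q := μP satisfies both AᵀQA - Q - AᵀQB (1/(1-α) + BᵀQB)⁻¹ BᵀQA ≺ 0 and 1/α - BᵀQB > 0. -/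
/-!
With `b = BᵀPB`, the negated matrix of the conclusion equals `μ • (G - t(μ) • S)`, where
`G ≻ 0` is the negated matrix of the hypothesis, `S = w wᵀ` with `w = AᵀPB`, and
`t(μ) = (1-α)/b - μ/(1/(1-α) + μb)`. The gap `t` vanishes at `μ₀ = 1/(αb)`, so for `μ < μ₀`
close to `μ₀` the rank-one perturbation `G - t(μ) • S` stays positive definite: by
Cauchy–Schwarz for the form of `G`, `(w ⬝ᵥ x)² ≤ (w ⬝ᵥ G⁻¹ w) (x ⬝ᵥ G x)`.
-/

open Matrix

open Filter Topology Set

theorem Matrix.PosSemidef.dotProduct_mulVec_sq_le {n : Type*} [Fintype n]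
    {G : Matrix n n ℝ} (hG : G.PosSemidef) (u x : n → ℝ) :
    (u ⬝ᵥ G *ᵥ x) ^ 2 ≤ (u ⬝ᵥ G *ᵥ u) * (x ⬝ᵥ G *ᵥ x) := by
  let _ := G.toSeminormedAddCommGroup hG
  let _ := G.toInnerProductSpace hG
  have h := real_inner_mul_inner_self_le u x
  -- the inner product induced by `G` is `⟪x, y⟫ = (G *ᵥ y) ⬝ᵥ star x`
  change (G *ᵥ x) ⬝ᵥ star u * (G *ᵥ x) ⬝ᵥ star u ≤
    (G *ᵥ u) ⬝ᵥ star u * (G *ᵥ x) ⬝ᵥ star x at h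
  simpa only [star_trivial, dotProduct_comm _ u, dotProduct_comm _ x, sq] using h

theorem Matrix.dotProduct_vecMulVec_self_mulVec {n : Type*} [Fintype n] (w x : n → ℝ) :
    x ⬝ᵥ vecMulVec w w *ᵥ x = (w ⬝ᵥ x) ^ 2 := by
  rw [vecMulVec_mulVec]
  simp [dotProduct_comm x w, sq]

theorem Matrix.PosDef.sq_dotProduct_le {n : Type*} [Fintype n] [DecidableEq n]
    {G : Matrix n n ℝ} (hG : G.PosDef) (w x : n → ℝ) :
    (w ⬝ᵥ x) ^ 2 ≤ (w ⬝ᵥ G⁻¹ *ᵥ w) * (x ⬝ᵥ G *ᵥ x) := by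
  have hGt : Gᵀ = G := by
    rw [← conjTranspose_eq_transpose_of_trivial]; exact hG.isHermitian
  have hGG : G *ᵥ (G⁻¹ *ᵥ w) = w := by
    rw [mulVec_mulVec, mul_nonsing_inv _ hG.det_pos.ne'.isUnit, one_mulVec]
  have hu : ∀ y, G⁻¹ *ᵥ w ⬝ᵥ G *ᵥ y = w ⬝ᵥ y := fun y => by
    rw [dotProduct_mulVec, ← mulVec_transpose, hGt, hGG]
  have := hG.posSemidef.dotProduct_mulVec_sq_le (G⁻¹ *ᵥ w) x
  rwa [hu, hu] at this

theorem Matrix.PosDef.sub_smul_vecMulVec_self {n : Type*} [Fintype n] [DecidableEq n]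
    {G : Matrix n n ℝ} (hG : G.PosDef) (w : n → ℝ) {t : ℝ}
    (ht : t * (w ⬝ᵥ G⁻¹ *ᵥ w) < 1) : (G - t • vecMulVec w w).PosDef := by
  have hS : (vecMulVec w w).IsHermitian := by
    simpa using (posSemidef_vecMulVec_self_star w).isHermitian
  refine .of_dotProduct_mulVec_pos (hG.isHermitian.sub (hS.smul (IsSelfAdjoint.all t)))
    fun x hx => ?_
  have hGx := hG.dotProduct_mulVec_pos hx
  have hcs := hG.sq_dotProduct_le w x
  have hk : 0 ≤ w ⬝ᵥ G⁻¹ *ᵥ w := by simpa using hG.inv.posSemidef.dotProduct_mulVec_nonneg w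
  rw [star_trivial] at hGx ⊢
  rw [sub_mulVec, smul_mulVec, dotProduct_sub, dotProduct_smul, smul_eq_mul,
    dotProduct_vecMulVec_self_mulVec]
  rcases le_or_gt t 0 with ht0 | ht0
  · nlinarith [sq_nonneg (w ⬝ᵥ x)]
  · nlinarith [mul_le_mul_of_nonneg_left hcs ht0.le]

theorem Matrix.mul_transpose_eq_vecMulVec {m ι α : Type*} [Fintype ι] [Unique ι]
    [NonUnitalNonAssocSemiring α] (C D : Matrix m ι α) : C * Dᵀ = vecMulVec (C.col default) (D.col default) := by
  ext i j
  simp [mul_apply, vecMulVec_apply]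

theorem tendsto_riccati_gap {α b : ℝ} (hα : α ∈ Ioo (0 : ℝ) 1) (hb : 0 < b) :
    Tendsto (fun μ => (1 - α) / b - μ / (1 / (1 - α) + μ * b)) (𝓝 (1 / (α * b))) (𝓝 0) := by
  obtain ⟨hα0, hα1⟩ := hα
  have hβ : 1 - α ≠ 0 := by linarith
  have hden : 1 / (1 - α) + 1 / (α * b) * b = 1 / (α * (1 - α)) := by
    field_simp; ring
  have hcont : ContinuousAt (fun μ => (1 - α) / b - μ / (1 / (1 - α) + μ * b)) (1 / (α * b)) := by
    refine continuousAt_const.sub (continuousAt_id.div (by fun_prop) ?_)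
    rw [hden]; positivity
  convert hcont.tendsto using 2
  rw [hden]; field_simp; ring

theorem riccati_scaling_general
    {n : ℕ} (A : Matrix (Fin n) (Fin n) ℝ) (B : Matrix (Fin n) (Fin 1) ℝ)
    (P : Matrix (Fin n) (Fin n) ℝ) (α : ℝ) (hα : α ∈ Set.Ioo (0:ℝ) 1)
    (hP : P.PosDef) (hb : 0 < (Bᵀ * P * B) 0 0)
    (hric : NegDef (Aᵀ * P * A - P
        - ((1 - α) / ((Bᵀ * P * B) 0 0)) • (Aᵀ * P * B * (Bᵀ * P * A)))) :
    ∃ μ : ℝ, 0 < μ ∧ μ < 1 / (α * ((Bᵀ * P * B) 0 0)) ∧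
      (NegDef (Aᵀ * (μ • P) * A - μ • P
          - (1 / (1 / (1 - α) + (Bᵀ * (μ • P) * B) 0 0))
              • (Aᵀ * (μ • P) * B * (Bᵀ * (μ • P) * A)))
        ∧ 0 < 1 / α - (Bᵀ * (μ • P) * B) 0 0) := by
  set b := (Bᵀ * P * B) 0 0
  set G := -(Aᵀ * P * A - P - ((1 - α) / b) • (Aᵀ * P * B * (Bᵀ * P * A)))
  set w := (Aᵀ * P * B).col 0
  have hS : Aᵀ * P * B * (Bᵀ * P * A) = vecMulVec w w := by
    have hPt : Pᵀ = P := by rw [← conjTranspose_eq_transpose_of_trivial]; exact hP.isHermitian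
    have hBPA : Bᵀ * P * A = (Aᵀ * P * B)ᵀ := by
      simp only [transpose_mul, transpose_transpose, hPt, Matrix.mul_assoc]
    rw [hBPA, mul_transpose_eq_vecMulVec]
    rfl
  have hscale : ∀ μ : ℝ, (Bᵀ * (μ • P) * B) 0 0 = μ * b := fun μ => by
    simp [b, Matrix.mul_smul, Matrix.smul_mul]
  set μ₀ := 1 / (α * b)
  have hμ₀ : 0 < μ₀ := by have := hα.1; positivity
  have hnear : ∀ᶠ μ in 𝓝[<] μ₀,
      ((1 - α) / b - μ / (1 / (1 - α) + μ * b)) * (w ⬝ᵥ G⁻¹ *ᵥ w) < 1 ∧ 0 < μ ∧ μ < μ₀ := by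
    have hgap := ((tendsto_riccati_gap hα hb).mul_const (w ⬝ᵥ G⁻¹ *ᵥ w)).eventually
      (gt_mem_nhds (zero_mul (w ⬝ᵥ G⁻¹ *ᵥ w) ▸ one_pos))
    exact ((hgap.and (lt_mem_nhds hμ₀)).filter_mono nhdsWithin_le_nhds).and
      self_mem_nhdsWithin |>.mono fun _ h => ⟨h.1.1, h.1.2, h.2⟩
  obtain ⟨μ, hgap, hμ0, hμμ₀⟩ := hnear.exists
  refine ⟨μ, hμ0, hμμ₀, ?_, ?_⟩
  · have hpos := (hric.sub_smul_vecMulVec_self w hgap).smul hμ0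
    unfold NegDef
    convert hpos using 2
    rw [hscale, ← hS]
    simp only [Matrix.mul_smul, Matrix.smul_mul]
    module
  · have hαb : 0 < α * b := mul_pos hα.1 hb
    rw [hscale, sub_pos, lt_div_iff₀ hα.1]
    rw [lt_div_iff₀ hαb] at hμμ₀
    linarith

/-- Scaling argument: from the Riccati-type inequality one obtains, for a suitable
scaling `Q = μ P` with `0 < μ < 1/(α BᵀPB)`, the perturbed Riccati inequality together
with `1/α - BᵀQB > 0`. -/
theorem riccati_scaling
    {n : ℕ} (A : Matrix (Fin n) (Fin n) ℝ) (B : Matrix (Fin n) (Fin 1) ℝ)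
    (P : Matrix (Fin n) (Fin n) ℝ) (α : ℝ) (hα : α ∈ Set.Ioo (0:ℝ) 1)
    (hB : B ≠ 0) (hP : P.PosDef) (hb : 0 < (Bᵀ * P * B) 0 0)
    (hric : NegDef (Aᵀ * P * A - P
        - ((1 - α) / ((Bᵀ * P * B) 0 0)) • (Aᵀ * P * B * (Bᵀ * P * A)))) :
    ∃ μ : ℝ, 0 < μ ∧ μ < 1 / (α * ((Bᵀ * P * B) 0 0)) ∧
      (NegDef (Aᵀ * (μ • P) * A - μ • P
          - (1 / (1 / (1 - α) + (Bᵀ * (μ • P) * B) 0 0))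
              • (Aᵀ * (μ • P) * B * (Bᵀ * (μ • P) * A)))
        ∧ 0 < 1 / α - (Bᵀ * (μ • P) * B) 0 0) :=
  riccati_scaling_general A B P α hα hP hb hric
end

section
/- Let a ∈ ℝ with |a| > 1 (scalar plant x_{k+1} = a x_k + b u_k, b ≠ 0) and α ∈ (0,1). There exist p > 0 and f ∈ ℝ such that α a² p + (1-α)(a+bf)² p - p < 0 if and only if α < 1/a². (Scalar case of the critical loss probability for stochastic stabilization.) -/
/-!
Dividing the Lyapunov inequality by `p > 0` leaves `α a² + (1 - α)(a + b f)² < 1`, where the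
left side is the factor by which the closed loop scales `E[x²]` in one step. The second term is
nonnegative and vanishes for the deadbeat gain `f = -a / b`, so a stabilizing gain exists exactly
when `α a² < 1`.
-/

def secondMomentGrowth (α a b f : ℝ) : ℝ :=
  α * a ^ 2 + (1 - α) * (a + b * f) ^ 2

lemma lyapunov_neg_iff_secondMomentGrowth_lt_one {α a b f p : ℝ} (hp : 0 < p) :
    α * a ^ 2 * p + (1 - α) * (a + b * f) ^ 2 * p - p < 0 ↔ secondMomentGrowth α a b f < 1 := by
  rw [← mul_lt_iff_lt_one_left hp, secondMomentGrowth, sub_neg]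
  ring_nf

lemma le_secondMomentGrowth {α a : ℝ} (hα : α ≤ 1) (b f : ℝ) :
    α * a ^ 2 ≤ secondMomentGrowth α a b f := by
  have : 0 ≤ (1 - α) * (a + b * f) ^ 2 := mul_nonneg (sub_nonneg.2 hα) (sq_nonneg _)
  unfold secondMomentGrowth
  linarith

lemma secondMomentGrowth_deadbeat (α a : ℝ) {b : ℝ} (hb : b ≠ 0) :
    secondMomentGrowth α a b (-a / b) = α * a ^ 2 := by
  simp [secondMomentGrowth, mul_div_cancel₀ _ hb]

lemma exists_secondMomentGrowth_lt_one_iff {α a b : ℝ} (hα : α ≤ 1) (hb : b ≠ 0) :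
    (∃ f, secondMomentGrowth α a b f < 1) ↔ α * a ^ 2 < 1 :=
  ⟨fun ⟨f, hf⟩ => (le_secondMomentGrowth hα b f).trans_lt hf,
    fun h => ⟨-a / b, (secondMomentGrowth_deadbeat α a hb).trans_lt h⟩⟩

/-- Scalar case of the critical loss probability for stochastic stabilization:
for `|a| > 1`, `b ≠ 0`, a mean-square stabilizing gain exists iff `α < 1/a²`. -/
theorem scalar_critical_loss_probability
    (a b α : ℝ) (ha : 1 < |a|) (hb : b ≠ 0) (hα : α ∈ Set.Ioo (0:ℝ) 1) :
    (∃ p : ℝ, 0 < p ∧ ∃ f : ℝ,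
        α * a ^ 2 * p + (1 - α) * (a + b * f) ^ 2 * p - p < 0)
      ↔ α < 1 / a ^ 2 := by
  have ha2 : 0 < a ^ 2 := sq_pos_of_ne_zero (abs_pos.1 (one_pos.trans ha))
  calc (∃ p : ℝ, 0 < p ∧ ∃ f : ℝ, α * a ^ 2 * p + (1 - α) * (a + b * f) ^ 2 * p - p < 0)
      ↔ ∃ f, secondMomentGrowth α a b f < 1 :=
        ⟨fun ⟨_, hp, f, h⟩ => ⟨f, (lyapunov_neg_iff_secondMomentGrowth_lt_one hp).1 h⟩,
          fun ⟨f, hf⟩ => ⟨1, one_pos, f, (lyapunov_neg_iff_secondMomentGrowth_lt_one one_pos).2 hf⟩⟩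
    _ ↔ α * a ^ 2 < 1 := exists_secondMomentGrowth_lt_one_iff hα.2.le hb
    _ ↔ α < 1 / a ^ 2 := (lt_div_iff₀ ha2).symm
end

section
/- Let A ∈ ℝ^{n×n}, B ∈ ℝ^{n×m}, α ∈ (0,1). If there exist P ≻ 0 and F ∈ ℝ^{m×n} satisfying α AᵀPA + (1-α)(A+BF)ᵀP(A+BF) - P ≺ 0, then α |λ|² < 1 for every eigenvalue λ of A; i.e., α < 1/ρ(A)² where ρ is the spectral radius. (Necessary bound on the loss probability for mean-square stabilizability, MIMO case.) -/
open Matrix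

open scoped ComplexOrder

namespace Matrix

variable {n : Type*} [Fintype n]

theorem re_star_dotProduct_map_ofReal_mulVec (Q : Matrix n n ℝ) (v : n → ℂ) :
    (star v ⬝ᵥ Q.map (algebraMap ℝ ℂ) *ᵥ v).re
      = (fun i ↦ (v i).re) ⬝ᵥ Q *ᵥ (fun i ↦ (v i).re)
        + (fun i ↦ (v i).im) ⬝ᵥ Q *ᵥ (fun i ↦ (v i).im) := by
  simp only [dotProduct, mulVec, Pi.star_apply, map_apply, Finset.mul_sum, Complex.re_sum,
    ← Finset.sum_add_distrib]
  refine Finset.sum_congr rfl fun i _ ↦ Finset.sum_congr rfl fun j _ ↦ ?_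
  simp only [RCLike.star_def, Complex.mul_re, Complex.mul_im, Complex.conj_re, Complex.conj_im,
    Complex.coe_algebraMap, Complex.ofReal_re, Complex.ofReal_im]
  ring

theorem PosDef.map_ofReal {Q : Matrix n n ℝ} (hQ : Q.PosDef) :
    (Q.map (algebraMap ℝ ℂ)).PosDef := by
  have hherm : (Q.map (algebraMap ℝ ℂ)).IsHermitian :=
    hQ.isHermitian.map _ fun x ↦ by simp
  refine .of_dotProduct_mulVec_pos hherm fun v hv ↦ RCLike.pos_iff.mpr
    ⟨?_, hherm.im_star_dotProduct_mulVec_self v⟩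
  have hre_or_im : (fun i ↦ (v i).re) ≠ 0 ∨ (fun i ↦ (v i).im) ≠ 0 := by
    contrapose! hv
    exact funext fun i ↦ Complex.ext (congrFun hv.1 i) (congrFun hv.2 i)
  have hquad (x : n → ℝ) : 0 ≤ x ⬝ᵥ Q *ᵥ x := hQ.posSemidef.dotProduct_mulVec_nonneg x
  have hquad_pos {x : n → ℝ} (hx : x ≠ 0) : 0 < x ⬝ᵥ Q *ᵥ x := hQ.dotProduct_mulVec_pos hx
  rw [RCLike.re_to_complex, re_star_dotProduct_map_ofReal_mulVec]
  rcases hre_or_im with h | h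
  · exact add_pos_of_pos_of_nonneg (hquad_pos h) (hquad _)
  · exact add_pos_of_nonneg_of_pos (hquad _) (hquad_pos h)

variable {𝕜 : Type*} [RCLike 𝕜]

theorem mul_norm_sq_lt_one_of_posDef_sub {A P : Matrix n n 𝕜} {α : ℝ} (hP : P.PosSemidef)
    (h : (P - α • (Aᴴ * P * A)).PosDef) {l : 𝕜} {v : n → 𝕜} (hv : v ≠ 0)
    (hAv : A *ᵥ v = l • v) : α * ‖l‖ ^ 2 < 1 := by
  set s := star v ⬝ᵥ P *ᵥ v
  have hquad : star v ⬝ᵥ (P - α • (Aᴴ * P * A)) *ᵥ v = ((1 - α * ‖l‖ ^ 2 : ℝ) : 𝕜) * s := by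
    have hAPA : star v ⬝ᵥ (Aᴴ * P * A) *ᵥ v = star (A *ᵥ v) ⬝ᵥ P *ᵥ (A *ᵥ v) := by
      simp only [star_mulVec, dotProduct_mulVec, vecMul_vecMul, Matrix.mul_assoc]
    rw [sub_mulVec, dotProduct_sub, smul_mulVec, dotProduct_smul, hAPA, hAv, star_smul,
      mulVec_smul, smul_dotProduct, dotProduct_smul]
    simp only [smul_eq_mul, RCLike.real_smul_eq_coe_mul, ← mul_assoc, RCLike.star_def,
      RCLike.conj_mul]
    push_cast
    ring
  have hpos := RCLike.pos_iff.mp (hquad ▸ h.dotProduct_mulVec_pos hv :)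
  have hs := RCLike.nonneg_iff.mp (hP.dotProduct_mulVec_nonneg v)
  rw [RCLike.re_ofReal_mul] at hpos
  linarith [pos_of_mul_pos_left hpos.1 hs.1]

theorem exists_mulVec_eq_smul_of_mem_spectrum {K : Type*} [Field K] [DecidableEq n]
    {A : Matrix n n K} {l : K} (hl : l ∈ spectrum K A) : ∃ v ≠ 0, A *ᵥ v = l • v := by
  rw [← spectrum_toLin', ← Module.End.hasEigenvalue_iff_mem_spectrum] at hl
  obtain ⟨v, hv⟩ := hl.exists_hasEigenvector
  exact ⟨v, hv.2, hv.apply_eq_smul⟩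

theorem map_ofReal_sub_smul_transpose_mul_mul (A P : Matrix n n ℝ) (α : ℝ) :
    (P - α • (Aᵀ * P * A)).map (algebraMap ℝ ℂ)
      = P.map (algebraMap ℝ ℂ)
        - α • ((A.map (algebraMap ℝ ℂ))ᴴ * P.map (algebraMap ℝ ℂ) * A.map (algebraMap ℝ ℂ)) := by
  ext i j
  simp [Matrix.mul_apply, Finset.mul_sum, mul_assoc]

end Matrix

theorem posDef_sub_of_negDef_add_sub {n : ℕ} {P X Y : Matrix (Fin n) (Fin n) ℝ}
    (hY : Y.PosSemidef) (h : NegDef (X + Y - P)) : (P - X).PosDef := by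
  rw [show P - X = -(X + Y - P) + Y by abel]
  exact h.add_posSemidef hY

/-- Necessary bound on the loss probability for mean-square stabilizability (MIMO case):
if some `P ≻ 0` and gain `F` satisfy the closed-loop inequality, then
`α |λ|² < 1` for every eigenvalue `λ` of `A`. -/
theorem necessary_loss_probability_bound_mimo
    {n m : ℕ} (A : Matrix (Fin n) (Fin n) ℝ) (B : Matrix (Fin n) (Fin m) ℝ)
    (α : ℝ) (hα : α ∈ Set.Ioo (0:ℝ) 1)
    (P : Matrix (Fin n) (Fin n) ℝ) (F : Matrix (Fin m) (Fin n) ℝ)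
    (hP : P.PosDef)
    (h : NegDef (α • (Aᵀ * P * A)
          + (1 - α) • ((A + B * F)ᵀ * P * (A + B * F)) - P)) :
    ∀ l ∈ spectrum ℂ (A.map (algebraMap ℝ ℂ)), α * ‖l‖ ^ 2 < 1 := by
  intro l hl
  obtain ⟨v, hv, hAv⟩ := exists_mulVec_eq_smul_of_mem_spectrum hl
  have hclosed : ((1 - α) • ((A + B * F)ᵀ * P * (A + B * F))).PosSemidef := by
    rw [← conjTranspose_eq_transpose_of_trivial]
    exact (hP.posSemidef.conjTranspose_mul_mul_same _).smul (sub_nonneg.mpr hα.2.le)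
  have hstein := (posDef_sub_of_negDef_add_sub hclosed h).map_ofReal
  rw [map_ofReal_sub_smul_transpose_mul_mul] at hstein
  exact mul_norm_sq_lt_one_of_posDef_sub hP.map_ofReal.posSemidef hstein hv hAv
end
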